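/- Let λ ∈ ℝ, let A denote the automorphism of ℝ² given by the action of λ in Sol, i.e. A(x,y) = (e^λ x, e^{−λ} y), and let Λ₀ be a subgroup of ℝ² with A(Λ₀) = Λ₀. Let Λ be the subgroup of Sol generated by Λ₀ × {0} together with the element ((0,0),λ). Then for every v ∈ ℝ², the element (v,0) of Sol belongs to the normalizer of Λ if and only if A v − v ∈ Λ₀. -/

import Mathlib

/-- The action of `λ ∈ ℝ` on `ℝ²` by `(x, y) ↦ (e^λ x, e^{-λ} y)`, as an
additive group automorphism. -/
noncomputable def solAct (l : ℝ) : (ℝ × ℝ) ≃+ (ℝ × ℝ) where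
  toFun p := (Real.exp l * p.1, Real.exp (-l) * p.2)
  invFun p := (Real.exp (-l) * p.1, Real.exp l * p.2)
  left_inv p := by
    refine Prod.ext ?_ ?_ <;> simp [← mul_assoc, ← Real.exp_add]
  right_inv p := by
    refine Prod.ext ?_ ?_ <;> simp [← mul_assoc, ← Real.exp_add]
  map_add' p q := by
    simp [Prod.ext_iff]
    constructor <;> ring

/-- The homomorphism `Multiplicative ℝ →* MulAut (Multiplicative (ℝ × ℝ))`
defining the group `Sol` as a semidirect product. -/
noncomputable def solPhi : Multiplicative ℝ →* MulAut (Multiplicative (ℝ × ℝ)) where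
  toFun l := AddEquiv.toMultiplicative (solAct l.toAdd)
  map_one' := by
    ext p
    all_goals simp [solAct, AddEquiv.toMultiplicative, MulAut.one_apply]
  map_mul' a b := by
    ext p
    all_goals simp [solAct, AddEquiv.toMultiplicative, MulAut.mul_def, MulEquiv.trans_apply,
      Real.exp_add, Prod.ext_iff, toAdd_mul, neg_add]
    all_goals ring

/-- The group `Sol = ℝ² ⋊ ℝ`. -/
noncomputable abbrev Sol : Type := SemidirectProduct (Multiplicative (ℝ × ℝ)) (Multiplicative ℝ) solPhi

/-!
Conjugation by `(v, 0)` fixes `Λ₀ × {0}` pointwise and sends the generator `t = ((0,0), λ)` to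
`(v - A v, 0) · t`, so it preserves `Λ` exactly when `(v - A v, 0) ∈ Λ`. Because `A` preserves
`Λ₀`, every element of `Λ` has its `ℝ²`-component in `Λ₀`, so this happens iff `A v - v ∈ Λ₀`.
Only the commutativity of `ℝ²` is used, so the argument runs in any `N ⋊ G` with `N` abelian.
-/

open Subgroup

theorem Subgroup.mem_normalizer_closure_of_conj_mem {G : Type*} [Group G] {s : Set G} {g : G}
    (hconj : ∀ x ∈ s, g * x * g⁻¹ ∈ closure s) (hconj_inv : ∀ x ∈ s, g⁻¹ * x * g ∈ closure s) :
    g ∈ normalizer (closure s : Set G) := by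
  rw [mem_normalizer_iff_map_conj_eq, MonoidHom.map_closure]
  refine le_antisymm ((closure_le _).2 <| Set.image_subset_iff.2 hconj) ?_
  rw [closure_le, ← MonoidHom.map_closure]
  exact fun x hx ↦ ⟨_, hconj_inv x hx, by simp [mul_assoc]⟩

namespace SemidirectProduct

variable {N G : Type*} [Group G]

section Group

variable [Group N] {φ : G →* MulAut N}

theorem inl_mul_inr_mul_inl_inv (v : N) (g : G) :
    (inl v * inr g * (inl v)⁻¹ : N ⋊[φ] G) = inl (v * (φ g v)⁻¹) * inr g := by
  ext <;> simp

def prodStabilizer (φ : G →* MulAut N) (N₀ : Subgroup N) : Subgroup (N ⋊[φ] G) where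
  carrier := {x | x.left ∈ N₀ ∧ ∀ n, φ x.right n ∈ N₀ ↔ n ∈ N₀}
  one_mem' := ⟨N₀.one_mem, fun n ↦ by simp⟩
  mul_mem' := by
    rintro x y ⟨hxl, hxr⟩ ⟨hyl, hyr⟩
    exact ⟨N₀.mul_mem hxl ((hxr _).2 hyl), fun n ↦ by simp [hxr, hyr]⟩
  inv_mem' := by
    rintro x ⟨hxl, hxr⟩
    have hinv : ∀ n, φ x.right⁻¹ n ∈ N₀ ↔ n ∈ N₀ := fun n ↦ by
      simpa using (hxr (φ x.right⁻¹ n)).symm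
    exact ⟨(hinv _).2 (N₀.inv_mem hxl), hinv⟩

theorem left_mem_of_mem_closure {N₀ : Subgroup N} {g : G} (hg : ∀ n, φ g n ∈ N₀ ↔ n ∈ N₀)
    {x : N ⋊[φ] G} (hx : x ∈ closure (inl '' (N₀ : Set N) ∪ {inr g})) : x.left ∈ N₀ := by
  refine (closure_le (prodStabilizer φ N₀) |>.2 ?_ hx).1
  rintro _ (⟨n, hn, rfl⟩ | rfl)
  · exact ⟨hn, fun _ ↦ by simp⟩
  · exact ⟨N₀.one_mem, hg⟩

end Group

theorem inl_mem_normalizer_closure_iff [CommGroup N] {φ : G →* MulAut N} {N₀ : Subgroup N} {g : G}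
    (hg : ∀ n, φ g n ∈ N₀ ↔ n ∈ N₀) (v : N) :
    inl v ∈ normalizer
        ((closure (inl '' (N₀ : Set N) ∪ {inr g}) : Subgroup (N ⋊[φ] G)) : Set (N ⋊[φ] G)) ↔
      φ g v / v ∈ N₀ := by
  set Λ : Subgroup (N ⋊[φ] G) := closure (inl '' (N₀ : Set N) ∪ {inr g})
  have hinr : inr g ∈ Λ := subset_closure (Or.inr rfl)
  constructor
  · intro hv
    have hconj_inr := (mem_normalizer_iff.1 hv _).1 hinr
    rw [inl_mul_inr_mul_inl_inv, mul_mem_cancel_right hinr] at hconj_inr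
    simpa [div_eq_mul_inv] using N₀.inv_mem (left_mem_of_mem_closure hg hconj_inr)
  · intro hv
    have hconj : ∀ w : N, φ g w / w ∈ N₀ →
        ∀ x ∈ inl '' (N₀ : Set N) ∪ {inr g}, inl w * x * (inl w)⁻¹ ∈ Λ := by
      rintro w hw _ (⟨n, hn, rfl⟩ | rfl)
      · rw [← map_inv, ← map_mul, ← map_mul, mul_inv_cancel_comm]
        exact subset_closure (Or.inl ⟨n, hn, rfl⟩)
      · rw [inl_mul_inr_mul_inl_inv]
        refine mul_mem (subset_closure (Or.inl ⟨_, ?_, rfl⟩)) hinr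
        simpa [div_eq_mul_inv] using N₀.inv_mem hw
    refine mem_normalizer_closure_of_conj_mem (hconj v hv) fun x hx ↦ ?_
    have hv_inv : φ g v⁻¹ / v⁻¹ ∈ N₀ := by simpa [div_eq_mul_inv, mul_comm] using N₀.inv_mem hv
    simpa [Λ] using hconj v⁻¹ hv_inv x hx

end SemidirectProduct

/-- Let `Λ₀ ⊆ ℝ²` be a subgroup invariant under the automorphism
`A = solAct λ`, and let `Λ ⊆ Sol` be the subgroup generated by `Λ₀ × {0}` and
`((0,0), λ)`. Then for `v ∈ ℝ²`, the element `(v, 0)` of `Sol` normalizes `Λ`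
if and only if `A v - v ∈ Λ₀`. -/
theorem sol_mem_normalizer_iff (l : ℝ) (Λ₀ : AddSubgroup (ℝ × ℝ))
    (hΛ₀ : AddSubgroup.map (solAct l).toAddMonoidHom Λ₀ = Λ₀)
    (Λ : Subgroup Sol)
    (hΛ : Λ = Subgroup.closure
      ((SemidirectProduct.inl : Multiplicative (ℝ × ℝ) →* Sol) ''
          (Multiplicative.ofAdd '' (Λ₀ : Set (ℝ × ℝ))) ∪
        {SemidirectProduct.inr (Multiplicative.ofAdd l)}))
    (v : ℝ × ℝ) :
    (SemidirectProduct.inl (Multiplicative.ofAdd v) : Sol) ∈ Subgroup.normalizer (Λ : Set Sol) ↔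
      solAct l v - v ∈ Λ₀ := by
  have hinv (w : ℝ × ℝ) : solAct l w ∈ Λ₀ ↔ w ∈ Λ₀ := by
    conv_lhs => rw [← hΛ₀]
    exact AddSubgroup.mem_map_iff_mem (f := (solAct l).toAddMonoidHom) (solAct l).injective
  have hgen : Multiplicative.ofAdd '' (Λ₀ : Set (ℝ × ℝ)) = Λ₀.toSubgroup := by
    ext; simp
  rw [hΛ, hgen]
  exact SemidirectProduct.inl_mem_normalizer_closure_iff (fun n ↦ hinv n.toAdd) _
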